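/- arXiv:2502.11391 — 2 statements merged into one kernel-verified Lean document; each statement's English description precedes it below -/
import Mathlib

section
/- Let G be a matching covered bipartite graph with a Hamiltonian cycle C, and suppose G does not contain a conformal odd theta subgraph. Then every pair of crossed chords of C is strongly crossed. -/
/-- `M` is a perfect matching of `G`, regarded as a set of edges: every edge of `M` is an
edge of `G` and every vertex lies in exactly one edge of `M`. -/
def IsPM {V : Type*} (G : SimpleGraph V) (M : Set (Sym2 V)) : Prop :=
  M ⊆ G.edgeSet ∧ ∀ w : V, ∃! e, e ∈ M ∧ w ∈ e

/-- A graph is matchable if it has a perfect matching. -/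
def Matchable {V : Type*} (G : SimpleGraph V) : Prop :=
  ∃ M, IsPM G M

/-- A global forcing set of `G`: a set `S` of edges of `G` distinguishing all
perfect matchings of `G`. -/
def IsGlobalForcingSet {V : Type*} (G : SimpleGraph V) (S : Set (Sym2 V)) : Prop :=
  S ⊆ G.edgeSet ∧
    ∀ M₁ M₂, IsPM G M₁ → IsPM G M₂ → M₁ ≠ M₂ → S ∩ M₁ ≠ S ∩ M₂

/-- The global forcing number: the minimum cardinality of a global forcing set. -/
noncomputable def gf {V : Type*} (G : SimpleGraph V) : ℕ :=
  sInf {n | ∃ S, IsGlobalForcingSet G S ∧ S.ncard = n}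

/-- An anti-forcing set of a perfect matching `M` of `G`: a set `S` of edges of `G`
disjoint from `M` such that `M` is the unique perfect matching of `G - S`. -/
def IsAntiForcingSet {V : Type*} (G : SimpleGraph V) (M S : Set (Sym2 V)) : Prop :=
  S ⊆ G.edgeSet ∧ S ∩ M = ∅ ∧ IsPM (G.deleteEdges S) M ∧
    ∀ M', IsPM (G.deleteEdges S) M' → M' = M

/-- The anti-forcing number of a perfect matching `M` of `G`. -/
noncomputable def af {V : Type*} (G : SimpleGraph V) (M : Set (Sym2 V)) : ℕ :=
  sInf {n | ∃ S, IsAntiForcingSet G M S ∧ S.ncard = n}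

/-- The maximum anti-forcing number of `G`. -/
noncomputable def Af {V : Type*} (G : SimpleGraph V) : ℕ :=
  sSup {n | ∃ M, IsPM G M ∧ af G M = n}

/-- A connected graph with at least one edge is matching covered if every edge lies
in some perfect matching. -/
def MatchingCovered {V : Type*} (G : SimpleGraph V) : Prop :=
  G.Connected ∧ G.edgeSet.Nonempty ∧ ∀ e ∈ G.edgeSet, ∃ M, IsPM G M ∧ e ∈ M

/-- `G` contains a conformal odd theta subgraph: a conformal subgraph consisting of two
vertices joined by three pairwise internally vertex-disjoint paths, each of odd length
at least `3`. -/
def HasConformalOddTheta {V : Type*} (G : SimpleGraph V) : Prop :=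
  ∃ (u v : V) (P₁ P₂ P₃ : G.Walk u v),
    P₁.IsPath ∧ P₂.IsPath ∧ P₃.IsPath ∧
    Odd P₁.length ∧ Odd P₂.length ∧ Odd P₃.length ∧
    3 ≤ P₁.length ∧ 3 ≤ P₂.length ∧ 3 ≤ P₃.length ∧
    (∀ w, w ∈ P₁.support → w ∈ P₂.support → w = u ∨ w = v) ∧
    (∀ w, w ∈ P₁.support → w ∈ P₃.support → w = u ∨ w = v) ∧
    (∀ w, w ∈ P₂.support → w ∈ P₃.support → w = u ∨ w = v) ∧
    Matchable (SimpleGraph.induce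
      {x : V | x ∉ P₁.support ∧ x ∉ P₂.support ∧ x ∉ P₃.support} G)

/-- `a, b, c, d` occur in this cyclic order on a cycle of length `m` (positions taken
in `ZMod m`): starting from `a` and walking around the cycle we meet `b`, then `c`,
then `d`. -/
def CyclicOrder4 (m : ℕ) (a b c d : ZMod m) : Prop :=
  0 < (b - a).val ∧ (b - a).val < (c - a).val ∧ (c - a).val < (d - a).val

/-- The position of a vertex `v` along the closed walk `C`, as an element of
`ZMod C.length`. -/
noncomputable def cpos {V : Type*} [DecidableEq V] {G : SimpleGraph V} {a : V}
    (C : G.Walk a a) (v : V) : ZMod C.length :=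
  (C.support.idxOf v : ZMod C.length)

/-- `v` is black in the proper 2-coloring of the (even) cycle `C`. -/
def blackOn {V : Type*} [DecidableEq V] {G : SimpleGraph V} {a : V}
    (C : G.Walk a a) (v : V) : Prop :=
  C.support.idxOf v % 2 = 0

/-- `e` is a chord of the Hamiltonian cycle `C` of `G`: an edge of `G` joining two
vertices of `C` that is not an edge of `C`. -/
def IsChordOfWalk {V : Type*} {G : SimpleGraph V} {a : V}
    (C : G.Walk a a) (e : Sym2 V) : Prop :=
  e ∈ G.edgeSet ∧ e ∉ C.edges

/-- Two (vertex-disjoint) chords `e = x₁x₂`, `f = y₁y₂` of the cycle `C`, with `x₁, y₁`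
of the same color, are crossed: their ends occur in the cyclic order `x₁, y₁, x₂, y₂`
along `C`. -/
def CrossedOn {V : Type*} [DecidableEq V] {G : SimpleGraph V} {a : V}
    (C : G.Walk a a) (e f : Sym2 V) : Prop :=
  ∃ x₁ x₂ y₁ y₂ : V, e = s(x₁, x₂) ∧ f = s(y₁, y₂) ∧
    (blackOn C x₁ ↔ blackOn C y₁) ∧
    CyclicOrder4 C.length (cpos C x₁) (cpos C y₁) (cpos C x₂) (cpos C y₂)

/-- Two crossed chords `e = x₁x₂`, `f = y₁y₂` of the cycle `C` are strongly crossed: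
moreover both `x₁y₂` and `x₂y₁` are edges of `C`. -/
def StronglyCrossedOn {V : Type*} [DecidableEq V] {G : SimpleGraph V} {a : V}
    (C : G.Walk a a) (e f : Sym2 V) : Prop :=
  ∃ x₁ x₂ y₁ y₂ : V, e = s(x₁, x₂) ∧ f = s(y₁, y₂) ∧
    (blackOn C x₁ ↔ blackOn C y₁) ∧
    CyclicOrder4 C.length (cpos C x₁) (cpos C y₁) (cpos C x₂) (cpos C y₂) ∧
    s(x₁, y₂) ∈ C.edges ∧ s(x₂, y₁) ∈ C.edges

/-!
Read the Hamiltonian cycle periodically from `x₁` as `g : ℕ → V`, so that the crossed chords are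
`g 0 g β` and `g α g γ` with `0 < α < β < γ < n`; bipartiteness makes `α` even, `β` and `γ` odd and
`n` even. If `γ + 1 < n`, the arcs `g γ … g n`, `g 0 → g β … g γ` and `g 0 … g α → g γ` form an
odd theta between `x₁ = g 0` and `y₂ = g γ`, and the vertices it misses, `g (α + 1) … g (β - 1)`,
are evenly many consecutive ones, matched in pairs along the cycle. Reading the cycle from `x₂`
instead gives the same contradiction unless `β = α + 1`.
-/

open SimpleGraph

namespace SimpleGraph

variable {V : Type*} {G : SimpleGraph V}

def seqWalk (g : ℕ → V) (hadj : ∀ t, G.Adj (g t) (g (t + 1))) (i : ℕ) :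
    (len : ℕ) → G.Walk (g i) (g (i + len))
  | 0 => Walk.nil
  | len + 1 => (seqWalk g hadj i len).concat (hadj (i + len))

section seqWalk

variable (g : ℕ → V) (hadj : ∀ t, G.Adj (g t) (g (t + 1))) (i : ℕ)

@[simp]
theorem length_seqWalk (len : ℕ) : (seqWalk g hadj i len).length = len := by
  induction len with
  | zero => rfl
  | succ len ih => simp [seqWalk, ih]

theorem support_seqWalk (len : ℕ) :
    (seqWalk g hadj i len).support = (List.range (len + 1)).map (fun t => g (i + t)) := by
  induction len with
  | zero => rfl
  | succ len ih => rw [seqWalk, Walk.support_concat, ih]; simp [List.range_succ]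

theorem mem_support_seqWalk {len : ℕ} {v : V} :
    v ∈ (seqWalk g hadj i len).support ↔ ∃ t, i ≤ t ∧ t ≤ i + len ∧ g t = v := by
  simp only [support_seqWalk, List.mem_map, List.mem_range]
  constructor
  · rintro ⟨t, ht, rfl⟩; exact ⟨i + t, by omega, by omega, rfl⟩
  · rintro ⟨t, h₁, h₂, rfl⟩; exact ⟨t - i, by omega, by rw [Nat.add_sub_cancel' h₁]⟩

end seqWalk

namespace Walk

variable {u : V}

def getCycleVert (C : G.Walk u u) (t : ℕ) : V := C.getVert (t % C.length)

variable (C : G.Walk u u)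

theorem getVert_mod_length {k : ℕ} (hk : k ≤ C.length) :
    C.getVert (k % C.length) = C.getVert k := by
  rcases hk.lt_or_eq with hk | rfl
  · rw [Nat.mod_eq_of_lt hk]
  · rw [Nat.mod_self, getVert_zero, getVert_length]

theorem getCycleVert_eq_of_cast_eq {s t : ℕ} (h : (s : ZMod C.length) = t) :
    C.getCycleVert s = C.getCycleVert t := by
  rw [getCycleVert, getCycleVert, (ZMod.natCast_eq_natCast_iff' s t _).1 h]

theorem getCycleVert_idxOf [DecidableEq V] {v : V} (hv : v ∈ C.support) :
    C.getCycleVert (C.support.idxOf v) = v := by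
  rw [getCycleVert, getVert_mod_length, getVert_support_idxOf _ hv]
  have := List.idxOf_lt_length_iff.2 hv
  rw [length_support] at this
  omega

theorem mk_getCycleVert_mem_edges (hC : 0 < C.length) (t : ℕ) :
    s(C.getCycleVert t, C.getCycleVert (t + 1)) ∈ C.edges := by
  have ht : t % C.length < C.length := Nat.mod_lt _ hC
  rw [mk_mem_edges_iff_exists]
  refine ⟨t % C.length, ht, ?_⟩
  rw [getCycleVert, getCycleVert, ← Nat.mod_add_mod, getVert_mod_length _ ht]

end Walk

/-- `g t` is the vertex at position `t mod n` along a Hamiltonian cycle of `G` of length `n`. -/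
structure IsHamiltonianCycleSeq (G : SimpleGraph V) (n : ℕ) (g : ℕ → V) : Prop where
  adj : ∀ t, G.Adj (g t) (g (t + 1))
  eq_iff : ∀ s t, g s = g t ↔ (s : ZMod n) = t
  exists_lt_apply_eq : ∀ v, ∃ t < n, g t = v

namespace IsHamiltonianCycleSeq

variable {n : ℕ} {g : ℕ → V} (hg : IsHamiltonianCycleSeq G n g)
include hg

theorem pos : 0 < n := by
  obtain ⟨t, ht, -⟩ := hg.exists_lt_apply_eq (g 0)
  omega

theorem shift (k : ℕ) : IsHamiltonianCycleSeq G n (fun t => g (k + t)) where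
  adj t := hg.adj (k + t)
  eq_iff s t := by rw [hg.eq_iff]; push_cast; exact add_right_inj _
  exists_lt_apply_eq v := by
    have : NeZero n := ⟨hg.pos.ne'⟩
    obtain ⟨t, -, rfl⟩ := hg.exists_lt_apply_eq v
    refine ⟨((t : ZMod n) - k).val, ZMod.val_lt _, ?_⟩
    rw [hg.eq_iff]
    push_cast [ZMod.natCast_val, ZMod.cast_id]
    ring

theorem apply_add_period (t : ℕ) : g (t + n) = g t := by
  rw [hg.eq_iff, Nat.cast_add, ZMod.natCast_self, add_zero]

theorem apply_period : g n = g 0 := by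
  simpa using hg.apply_add_period 0

theorem eq_of_apply_eq {s t : ℕ} (h : g s = g t) (hst : s ≤ t) (hts : t < s + n) : s = t := by
  rw [hg.eq_iff, ZMod.natCast_eq_natCast_iff] at h
  have := Nat.eq_zero_of_dvd_of_lt ((Nat.modEq_iff_dvd' hst).1 h) (by omega)
  omega

theorem eq_or_of_apply_eq {s t : ℕ} (h : g s = g t) (hs : s ≤ n) (ht : t ≤ n) :
    s = t ∨ s = 0 ∧ t = n ∨ s = n ∧ t = 0 := by
  rcases le_total s t with hst | hts
  · by_cases hb : s = 0 ∧ t = n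
    · exact .inr (.inl hb)
    · exact .inl (hg.eq_of_apply_eq h hst (by omega))
  · by_cases hb : s = n ∧ t = 0
    · exact .inr (.inr hb)
    · exact .inl (hg.eq_of_apply_eq h.symm hts (by omega)).symm

theorem isPath_seqWalk (i : ℕ) {len : ℕ} (hlen : len < n) :
    (seqWalk g hg.adj i len).IsPath := by
  refine Walk.IsPath.mk' ?_
  rw [support_seqWalk]
  refine List.nodup_range.map_on fun s hs t ht h => ?_
  rw [List.mem_range] at hs ht
  rcases le_total s t with hst | hts
  · have := hg.eq_of_apply_eq h (by omega) (by omega); omega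
  · have := hg.eq_of_apply_eq h.symm (by omega) (by omega); omega

theorem color_eq_iff (c : G.Coloring (Fin 2)) (s t : ℕ) :
    c (g s) = c (g t) ↔ (Even s ↔ Even t) := by
  have fin_two_ne : ∀ x y z : Fin 2, x ≠ y → (y = z ↔ ¬ x = z) := by decide
  have fin_two_eq : ∀ x y z : Fin 2, x = y ↔ (x = z ↔ y = z) := by decide
  have base : ∀ t, c (g t) = c (g 0) ↔ Even t := by
    intro t
    induction t with
    | zero => simp
    | succ t ih => rw [fin_two_ne _ _ _ (c.valid (hg.adj t)), ih, Nat.even_add_one]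
  rw [fin_two_eq _ _ (c (g 0)), base, base]

theorem even_period (c : G.Coloring (Fin 2)) : Even n := by
  simpa using (hg.color_eq_iff c n 0).1 (by rw [hg.apply_period])

theorem matchable_induce (i m : ℕ) (hm : 2 * m ≤ n) {S : Set V}
    (hS : ∀ v, v ∈ S ↔ ∃ t < 2 * m, g (i + t) = v) : Matchable (G.induce S) := by
  have hmem {t : ℕ} (ht : t < 2 * m) : g (i + t) ∈ S := (hS _).2 ⟨t, ht, rfl⟩
  have hinj {s t : ℕ} (hs : s < 2 * m) (ht : t < 2 * m) (h : g (i + s) = g (i + t)) : s = t := by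
    rcases le_total s t with hst | hts
    · have := hg.eq_of_apply_eq h (by omega) (by omega); omega
    · have := hg.eq_of_apply_eq h.symm (by omega) (by omega); omega
  let pair (k : ℕ) (hk : k < m) : Sym2 S :=
    s(⟨g (i + 2 * k), hmem (by omega)⟩, ⟨g (i + 2 * k + 1), hmem (t := 2 * k + 1) (by omega)⟩)
  refine ⟨{e | ∃ k hk, e = pair k hk}, ?_, ?_⟩
  · rintro _ ⟨k, hk, rfl⟩
    exact hg.adj (i + 2 * k)
  · rintro ⟨_, hv⟩
    obtain ⟨t, ht, rfl⟩ := (hS _).1 hv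
    refine ⟨pair (t / 2) (by omega), ⟨⟨t / 2, by omega, rfl⟩, ?_⟩, ?_⟩
    · simp only [pair, Sym2.mem_iff, Subtype.mk.injEq]
      rcases Nat.even_or_odd' t with ⟨k, rfl | rfl⟩
      · left; congr 2; omega
      · right; congr 1; omega
    · rintro _ ⟨⟨k, hk, rfl⟩, hk'⟩
      simp only [pair, Sym2.mem_iff, Subtype.mk.injEq] at hk'
      obtain rfl : k = t / 2 := by
        rcases hk' with h | h
        · have := hinj ht (by omega) h; omega
        · have := hinj (t := 2 * k + 1) ht (by omega) h; omega
      rfl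

theorem exists_theta_walks {α β γ : ℕ} (hc₁ : G.Adj (g 0) (g β)) (hc₂ : G.Adj (g α) (g γ))
    (hα₀ : 0 < α) (hαβ : α < β) (hβγ : β < γ) (hγn : γ < n) :
    ∃ P₁ P₂ P₃ : G.Walk (g 0) (g γ), P₁.IsPath ∧ P₂.IsPath ∧ P₃.IsPath ∧
      P₁.length = n - γ ∧ P₂.length = γ - β + 1 ∧ P₃.length = α + 1 ∧
      (∀ w, w ∈ P₁.support ↔ ∃ t, γ ≤ t ∧ t ≤ n ∧ g t = w) ∧
      (∀ w, w ∈ P₂.support ↔ w = g 0 ∨ ∃ t, β ≤ t ∧ t ≤ γ ∧ g t = w) ∧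
      (∀ w, w ∈ P₃.support ↔ (∃ t, t ≤ α ∧ g t = w) ∨ w = g γ) := by
  have hP₁ := hg.isPath_seqWalk γ (len := n - γ) (by omega)
  have hP₂ := hg.isPath_seqWalk β (len := γ - β) (by omega)
  have hP₃ := hg.isPath_seqWalk 0 (len := α) (by omega)
  refine ⟨((seqWalk g hg.adj γ (n - γ)).copy rfl
      ((congrArg g (by omega)).trans hg.apply_period)).reverse,
    .cons hc₁ ((seqWalk g hg.adj β (γ - β)).copy rfl (congrArg g (by omega))),
    ((seqWalk g hg.adj 0 α).copy rfl (congrArg g (by omega))).concat hc₂,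
    ((Walk.isPath_copy _ _ _).2 hP₁).reverse, ((Walk.isPath_copy _ _ _).2 hP₂).cons ?_,
    ((Walk.isPath_copy _ _ _).2 hP₃).concat ?_ hc₂, by simp, by simp, by simp, fun w => ?_,
    fun w => ?_, fun w => ?_⟩
  · rw [Walk.support_copy, mem_support_seqWalk]
    rintro ⟨t, ht₁, ht₂, h⟩
    have := hg.eq_of_apply_eq h.symm (Nat.zero_le t) (by omega)
    omega
  · rw [Walk.support_copy, mem_support_seqWalk]
    rintro ⟨t, -, ht, h⟩
    have := hg.eq_of_apply_eq h (by omega) (by omega)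
    omega
  · simp only [Walk.support_reverse, List.mem_reverse, Walk.support_copy, mem_support_seqWalk,
      Nat.add_sub_cancel' hγn.le]
  · simp only [Walk.support_cons, List.mem_cons, Walk.support_copy, mem_support_seqWalk,
      Nat.add_sub_cancel' hβγ.le]
  · simp [Walk.support_concat, mem_support_seqWalk]

theorem not_mem_theta_walks_iff {α β γ : ℕ} {P₁ P₂ P₃ : G.Walk (g 0) (g γ)}
    (hS₁ : ∀ w, w ∈ P₁.support ↔ ∃ t, γ ≤ t ∧ t ≤ n ∧ g t = w)
    (hS₂ : ∀ w, w ∈ P₂.support ↔ w = g 0 ∨ ∃ t, β ≤ t ∧ t ≤ γ ∧ g t = w)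
    (hS₃ : ∀ w, w ∈ P₃.support ↔ (∃ t, t ≤ α ∧ g t = w) ∨ w = g γ)
    (hαβ : α < β) (hβγ : β < γ) (hγn : γ < n) (w : V) :
    w ∈ {x | x ∉ P₁.support ∧ x ∉ P₂.support ∧ x ∉ P₃.support} ↔
      ∃ t < β - α - 1, g (α + 1 + t) = w := by
  simp only [Set.mem_ofPred_eq, hS₁, hS₂, hS₃, not_or, not_exists, not_and]
  constructor
  · rintro ⟨h₁, ⟨-, h₂⟩, ⟨h₃, -⟩⟩
    obtain ⟨t, ht, rfl⟩ := hg.exists_lt_apply_eq w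
    have hαt : α < t := by by_contra! h; exact h₃ t h rfl
    have htβ : t < β := by
      by_contra! h
      rcases le_total t γ with h' | h'
      exacts [h₂ t h h' rfl, h₁ t h' ht.le rfl]
    exact ⟨t - (α + 1), by omega, congrArg g (by omega)⟩
  · rintro ⟨t, ht, rfl⟩
    refine ⟨fun s _ _ h => ?_, ⟨fun h => ?_, fun s _ _ h => ?_⟩, fun s _ h => ?_, fun h => ?_⟩
    all_goals have := hg.eq_or_of_apply_eq h (by omega) (by omega); omega

theorem hasConformalOddTheta_of_chords {α β γ : ℕ}
    (hc₁ : G.Adj (g 0) (g β)) (hc₂ : G.Adj (g α) (g γ))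
    (hα₀ : 0 < α) (hαβ : α < β) (hβγ : β < γ) (hγn : γ + 3 ≤ n)
    (hα : Even α) (hβ : Odd β) (hγ : Odd γ) (hn : Even n) : HasConformalOddTheta G := by
  rw [Nat.even_iff] at hα hn
  rw [Nat.odd_iff] at hβ hγ
  obtain ⟨P₁, P₂, P₃, hP₁, hP₂, hP₃, hl₁, hl₂, hl₃, hS₁, hS₂, hS₃⟩ :=
    hg.exists_theta_walks hc₁ hc₂ hα₀ hαβ hβγ (by omega)
  have hend {t : ℕ} (ht : t = 0 ∨ t = γ ∨ t = n) : g t = g 0 ∨ g t = g γ := by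
    rcases ht with rfl | rfl | rfl
    exacts [.inl rfl, .inr rfl, .inl hg.apply_period]
  refine ⟨g 0, g γ, P₁, P₂, P₃, hP₁, hP₂, hP₃, ?_, ?_, ?_, ?_, ?_, ?_, ?_, ?_, ?_, ?_⟩
  · rw [hl₁, Nat.odd_iff]; omega
  · rw [hl₂, Nat.odd_iff]; omega
  · rw [hl₃, Nat.odd_iff]; omega
  · omega
  · omega
  · omega
  · intro w h₁ h₂
    obtain ⟨t, ht₁, ht₂, rfl⟩ := (hS₁ w).1 h₁
    rcases (hS₂ _).1 h₂ with h | ⟨s, hs₁, hs₂, h⟩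
    · exact .inl h
    · exact hend (by have := hg.eq_or_of_apply_eq h (by omega) ht₂; omega)
  · intro w h₁ h₃
    obtain ⟨t, ht₁, ht₂, rfl⟩ := (hS₁ w).1 h₁
    rcases (hS₃ _).1 h₃ with ⟨s, hs, h⟩ | h
    · exact hend (by have := hg.eq_or_of_apply_eq h (by omega) ht₂; omega)
    · exact .inr h
  · intro w h₂ h₃
    rcases (hS₂ w).1 h₂ with h | ⟨t, ht₁, ht₂, rfl⟩
    · exact .inl h
    rcases (hS₃ _).1 h₃ with ⟨s, hs, h⟩ | h
    · exact hend (by have := hg.eq_or_of_apply_eq h (by omega) (by omega); omega)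
    · exact .inr h
  · have hm : 2 * ((β - α - 1) / 2) = β - α - 1 := by omega
    refine hg.matchable_induce (α + 1) ((β - α - 1) / 2) (by omega) fun w => ?_
    rw [hm]
    exact hg.not_mem_theta_walks_iff hS₁ hS₂ hS₃ hαβ hβγ (by omega) w

theorem eq_succ_and_succ_eq_of_not_hasConformalOddTheta (c : G.Coloring (Fin 2))
    (htheta : ¬ HasConformalOddTheta G) {α β γ : ℕ}
    (hc₁ : G.Adj (g 0) (g β)) (hc₂ : G.Adj (g α) (g γ)) (hcol : c (g α) = c (g 0))
    (hα₀ : 0 < α) (hαβ : α < β) (hβγ : β < γ) (hγn : γ < n) : β = α + 1 ∧ γ + 1 = n := by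
  have hα : Even α := by simpa using (hg.color_eq_iff c α 0).1 hcol
  have hβ : Odd β := by simpa using mt (hg.color_eq_iff c 0 β).2 (c.valid hc₁)
  have hγ : Odd γ := by simpa [hα] using mt (hg.color_eq_iff c α γ).2 (c.valid hc₂)
  have hn := hg.even_period c
  rw [Nat.even_iff] at hα hn
  rw [Nat.odd_iff] at hβ hγ
  constructor
  · by_contra hne
    -- read from `g β`, the chords become `g β g n` and `g γ g (n + α)`
    have hc₁' : G.Adj (g (β + 0)) (g (β + (n - β))) := by
      rw [add_zero, Nat.add_sub_cancel' (by omega), hg.apply_period]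
      exact hc₁.symm
    have hc₂' : G.Adj (g (β + (γ - β))) (g (β + (n - β + α))) := by
      rw [Nat.add_sub_cancel' hβγ.le, ← Nat.add_assoc, Nat.add_sub_cancel' (by omega),
        Nat.add_comm, hg.apply_add_period]
      exact hc₂.symm
    refine htheta ((hg.shift β).hasConformalOddTheta_of_chords hc₁' hc₂' ?_ ?_ ?_ ?_ ?_ ?_ ?_ ?_)
    all_goals (try simp only [Nat.even_iff, Nat.odd_iff]); omega
  · by_contra hne
    refine htheta (hg.hasConformalOddTheta_of_chords hc₁ hc₂ hα₀ hαβ hβγ ?_ ?_ ?_ ?_ ?_)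
    all_goals (try simp only [Nat.even_iff, Nat.odd_iff]); omega

end IsHamiltonianCycleSeq

theorem Walk.IsCycle.isHamiltonianCycleSeq {u : V} {C : G.Walk u u} (hC : C.IsCycle)
    (hham : ∀ v, v ∈ C.support) : IsHamiltonianCycleSeq G C.length C.getCycleVert := by
  classical
  have hn : 0 < C.length := by have := hC.three_le_length; omega
  have hmod (t : ℕ) : t % C.length ≤ C.length - 1 := by have := Nat.mod_lt t hn; omega
  refine ⟨fun t => C.adj_of_mem_edges (C.mk_getCycleVert_mem_edges hn t), fun s t => ?_,
    fun v => ⟨C.support.idxOf v % C.length, Nat.mod_lt _ hn, ?_⟩⟩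
  · refine ⟨fun h => ?_, C.getCycleVert_eq_of_cast_eq⟩
    rw [ZMod.natCast_eq_natCast_iff']
    exact hC.getVert_injOn' (hmod s) (hmod t) h
  · rw [C.getCycleVert_eq_of_cast_eq (ZMod.natCast_mod _ _), C.getCycleVert_idxOf (hham v)]

section cpos

variable [DecidableEq V] {u : V} {C : G.Walk u u}

theorem Walk.getCycleVert_idxOf_add_val_cpos_sub (hC : 0 < C.length) {x v : V}
    (hv : v ∈ C.support) : C.getCycleVert (C.support.idxOf x + (cpos C v - cpos C x).val) = v := by
  have : NeZero C.length := ⟨hC.ne'⟩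
  refine (C.getCycleVert_eq_of_cast_eq ?_).trans (C.getCycleVert_idxOf hv)
  push_cast [ZMod.natCast_val, ZMod.cast_id, cpos]
  ring

theorem Walk.IsCycle.color_eq_of_blackOn_iff (hC : C.IsCycle) (hham : ∀ v, v ∈ C.support)
    (c : G.Coloring (Fin 2)) {x y : V} (h : blackOn C x ↔ blackOn C y) : c x = c y := by
  rw [← C.getCycleVert_idxOf (hham x), ← C.getCycleVert_idxOf (hham y),
    (hC.isHamiltonianCycleSeq hham).color_eq_iff, Nat.even_iff, Nat.even_iff]
  exact h

end cpos

end SimpleGraph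

theorem statement_15_general {V : Type*} [DecidableEq V] (G : SimpleGraph V)
    (hbip : G.Colorable 2)
    (a : V) (C : G.Walk a a) (hC : C.IsCycle) (hham : ∀ v : V, v ∈ C.support)
    (htheta : ¬ HasConformalOddTheta G) :
    ∀ e f : Sym2 V, IsChordOfWalk C e → IsChordOfWalk C f →
      CrossedOn C e f → StronglyCrossedOn C e f := by
  rintro _ _ ⟨he, -⟩ ⟨hf, -⟩ ⟨x₁, x₂, y₁, y₂, rfl, rfl, hblack, hord⟩
  obtain ⟨c⟩ := hbip
  set g : ℕ → V := fun t => C.getCycleVert (C.support.idxOf x₁ + t)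
  have hg : IsHamiltonianCycleSeq G C.length g := (hC.isHamiltonianCycleSeq hham).shift _
  have hpos (v : V) : g (cpos C v - cpos C x₁).val = v :=
    C.getCycleVert_idxOf_add_val_cpos_sub hg.pos (hham v)
  have hpos₀ : g 0 = x₁ := by simpa using hpos x₁
  have : NeZero C.length := ⟨hg.pos.ne'⟩
  obtain ⟨hβ, hγ⟩ := hg.eq_succ_and_succ_eq_of_not_hasConformalOddTheta c htheta
    (by rw [hpos₀, hpos]; exact he) (by rw [hpos, hpos]; exact hf)
    (by rw [hpos₀, hpos]; exact (hC.color_eq_of_blackOn_iff hham c hblack).symm)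
    hord.1 hord.2.1 hord.2.2 (ZMod.val_lt _)
  have hedge (t : ℕ) : s(g t, g (t + 1)) ∈ C.edges := C.mk_getCycleVert_mem_edges hg.pos _
  refine ⟨x₁, x₂, y₁, y₂, rfl, rfl, hblack, hord, ?_, ?_⟩
  · simpa [hγ, hg.apply_period, hpos, hpos₀, Sym2.eq_swap] using
      hedge (cpos C y₂ - cpos C x₁).val
  · simpa [← hβ, hpos, Sym2.eq_swap] using hedge (cpos C y₁ - cpos C x₁).val

/-- Let `G` be a matching covered bipartite graph with a Hamiltonian cycle `C`
containing no conformal odd theta subgraph. Then every pair of crossed chords of `C`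
is strongly crossed. -/
theorem statement_15 {V : Type*} [Fintype V] [DecidableEq V] (G : SimpleGraph V)
    (hmc : MatchingCovered G) (hbip : G.Colorable 2)
    (a : V) (C : G.Walk a a) (hC : C.IsCycle) (hham : ∀ v : V, v ∈ C.support)
    (htheta : ¬ HasConformalOddTheta G) :
    ∀ e f : Sym2 V, IsChordOfWalk C e → IsChordOfWalk C f →
      CrossedOn C e f → StronglyCrossedOn C e f :=
  statement_15_general G hbip a C hC hham htheta
end

section
/- Let G be a bipartite graph consisting of a Hamiltonian cycle C of even length together with exactly two chords, and suppose these two chords are strongly crossed. Then gf(G) = Af(G) = 2, while c(G) = 3. -/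
/-- The cycle graph on `ZMod m` (for `m ≥ 3`): `i` is adjacent to `i ± 1`. -/
def cyc (m : ℕ) : SimpleGraph (ZMod m) where
  Adj i j := i ≠ j ∧ (j - i = 1 ∨ i - j = 1)
  symm := ⟨fun i j h => ⟨h.1.symm, h.2.symm⟩⟩
  loopless := ⟨fun i h => h.1 rfl⟩

/-- The black vertices in the proper 2-coloring of the even cycle on `ZMod m`. -/
def blackV (m : ℕ) (i : ZMod m) : Prop := i.val % 2 = 0

/-- `e` is (suitable as) a chord of the cycle on `ZMod m`: a non-loop pair of vertices
that is not an edge of the cycle. -/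
def IsChordOf (m : ℕ) (e : Sym2 (ZMod m)) : Prop :=
  ¬ e.IsDiag ∧ e ∉ (cyc m).edgeSet

/-- The graph consisting of the cycle on `ZMod m` together with the chords in `F`. -/
def cycleWithChords (m : ℕ) (F : Set (Sym2 (ZMod m))) : SimpleGraph (ZMod m) :=
  cyc m ⊔ SimpleGraph.fromEdgeSet F

/-- Two (vertex-disjoint) chords `e = x₁x₂` and `f = y₁y₂` with `x₁, y₁` of the same
color are parallel: their ends occur in the cyclic order `x₁, x₂, y₁, y₂`. -/
def ParallelChords (m : ℕ) (e f : Sym2 (ZMod m)) : Prop :=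
  ∃ x₁ x₂ y₁ y₂ : ZMod m, e = s(x₁, x₂) ∧ f = s(y₁, y₂) ∧
    (blackV m x₁ ↔ blackV m y₁) ∧ CyclicOrder4 m x₁ x₂ y₁ y₂

/-- Two (vertex-disjoint) chords `e = x₁x₂` and `f = y₁y₂` with `x₁, y₁` of the same
color are crossed: their ends occur in the cyclic order `x₁, y₁, x₂, y₂`. -/
def CrossedChords (m : ℕ) (e f : Sym2 (ZMod m)) : Prop :=
  ∃ x₁ x₂ y₁ y₂ : ZMod m, e = s(x₁, x₂) ∧ f = s(y₁, y₂) ∧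
    (blackV m x₁ ↔ blackV m y₁) ∧ CyclicOrder4 m x₁ y₁ x₂ y₂

/-- Two crossed chords `e = x₁x₂`, `f = y₁y₂` are strongly crossed if moreover both
`x₁y₂` and `x₂y₁` are edges of the cycle. -/
def StronglyCrossedChords (m : ℕ) (e f : Sym2 (ZMod m)) : Prop :=
  ∃ x₁ x₂ y₁ y₂ : ZMod m, e = s(x₁, x₂) ∧ f = s(y₁, y₂) ∧
    (blackV m x₁ ↔ blackV m y₁) ∧ CyclicOrder4 m x₁ y₁ x₂ y₂ ∧
    (cyc m).Adj x₁ y₂ ∧ (cyc m).Adj x₂ y₁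

/-- `G` belongs to the family `B₀` of even cycles. -/
def MemB0 {V : Type*} (G : SimpleGraph V) : Prop :=
  ∃ n : ℕ, 2 ≤ n ∧ Nonempty (G ≃g cyc (2 * n))

/-- `G` belongs to the family `B₁` of bipartite graphs consisting of a Hamiltonian
cycle together with exactly one chord. -/
def MemB1 {V : Type*} (G : SimpleGraph V) : Prop :=
  ∃ (n : ℕ) (e : Sym2 (ZMod (2 * n))), 2 ≤ n ∧ IsChordOf (2 * n) e ∧
    (cycleWithChords (2 * n) {e}).Colorable 2 ∧
    Nonempty (G ≃g cycleWithChords (2 * n) {e})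

/-- `G` belongs to the family `B₂` of graphs consisting of a Hamiltonian cycle
together with exactly two strongly crossed chords. -/
def MemB2 {V : Type*} (G : SimpleGraph V) : Prop :=
  ∃ (n : ℕ) (e f : Sym2 (ZMod (2 * n))), 2 ≤ n ∧ e ≠ f ∧
    IsChordOf (2 * n) e ∧ IsChordOf (2 * n) f ∧
    StronglyCrossedChords (2 * n) e f ∧
    Nonempty (G ≃g cycleWithChords (2 * n) {e, f})

/-- `G` belongs to the family `B₃` of bipartite graphs consisting of a Hamiltonian
cycle together with one or more pairwise parallel chords. -/
def MemB3 {V : Type*} (G : SimpleGraph V) : Prop :=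
  ∃ (n : ℕ) (F : Set (Sym2 (ZMod (2 * n)))), 2 ≤ n ∧ F.Nonempty ∧
    (∀ e ∈ F, IsChordOf (2 * n) e) ∧
    (∀ e ∈ F, ∀ f ∈ F, e ≠ f → ParallelChords (2 * n) e f) ∧
    (cycleWithChords (2 * n) F).Colorable 2 ∧
    Nonempty (G ≃g cycleWithChords (2 * n) F)

/-- A matchable graph `G` is strongly uniform if `gf(H) = Af(H)` for every conformal
matchable subgraph `H` of `G`. -/
def StronglyUniform {V : Type*} (G : SimpleGraph V) : Prop :=
  ∀ H : G.Subgraph, Matchable H.coe →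
    Matchable (SimpleGraph.induce H.vertsᶜ G) → gf H.coe = Af H.coe

/-!
Up to rotation the two strongly crossed chords are `e = x (x+D+1)` and `f = (x+D) (x-1)` with `D`
even. A perfect matching containing neither chord is one of the two perfect matchings of the cycle;
one containing `e` cannot contain `f`, and is then forced along the two paths into which the chords
cut the cycle (symmetrically for `f`). So `G` has exactly four perfect matchings, and the four cycle
edges `(0,1)`, `(1,2)`, `(D+1,D+2)`, `(D+2,D+3)` (indices relative to `x`) meet them in known
patterns. The edges `(1,2)` and `(D+2,D+3)` already separate all four, while one edge cannot
separate three, so `gf = 2`. Every perfect matching is the unique one avoiding a suitable pair of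
these edges, and the remaining ones include two disjoint matchings, which a single edge cannot both
meet; so every anti-forcing number, hence `Af`, equals `2`.
-/

open Function

theorem iff_odd_of_alternating {b : ℕ → Prop} {a c e : ℕ}
    (h : ∀ j, a ≤ j → j < c → (b (j + 1) ↔ ¬ b j)) (he : ¬ b e) (hae : a ≤ e) (hec : e ≤ c) :
    ∀ j, a ≤ j → j ≤ c → (b j ↔ (j + e) % 2 = 1) := by
  have key : ∀ j, a ≤ j → j ≤ c → (b j ↔ (b a ↔ (j - a) % 2 = 0)) := by
    intro j haj hjc
    induction j, haj using Nat.le_induction with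
    | base => simp
    | succ j haj ih =>
      rw [h j haj (by omega), ih (by omega)]
      rcases Nat.mod_two_eq_zero_or_one (j - a) with h' | h' <;>
        simp only [h', show (j + 1 - a) % 2 = 1 - (j - a) % 2 by omega] <;> tauto
  intro j haj hjc
  rw [key j haj hjc]
  have := key e hae hec
  rcases Nat.mod_two_eq_zero_or_one (j - a) with h₁ | h₁ <;>
    rcases Nat.mod_two_eq_zero_or_one (e - a) with h₂ | h₂ <;>
    simp only [h₁, h₂] at this ⊢ <;> constructor <;> intro <;> first | omega | tauto

section PerfectMatching

variable {V : Type*} {G : SimpleGraph V} {M M' S : Set (Sym2 V)}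

theorem IsPM.eq_of_mem_of_mem (hM : IsPM G M) {v : V} {z z' : Sym2 V} (hz : z ∈ M) (hz' : z' ∈ M)
    (hvz : v ∈ z) (hvz' : v ∈ z') : z = z' :=
  (hM.2 v).unique ⟨hz, hvz⟩ ⟨hz', hvz'⟩

theorem IsPM.mem_iff_not_mem (hM : IsPM G M) {v : V} {z₁ z₂ : Sym2 V} (hne : z₁ ≠ z₂)
    (h₁ : v ∈ z₁) (h₂ : v ∈ z₂) (hcover : ∀ z ∈ M, v ∈ z → z = z₁ ∨ z = z₂) :
    z₂ ∈ M ↔ z₁ ∉ M := by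
  obtain ⟨z, ⟨hzM, hvz⟩, -⟩ := hM.2 v
  refine ⟨fun hz₂ hz₁ => hne (hM.eq_of_mem_of_mem hz₁ hz₂ h₁ h₂), fun hz₁ => ?_⟩
  rcases hcover z hzM hvz with rfl | rfl
  exacts [absurd hzM hz₁, hzM]

theorem IsPM.eq_of_subset (hM : IsPM G M) (hM' : IsPM G M') (h : M' ⊆ M) : M' = M := by
  refine h.antisymm fun z hz => ?_
  induction z using Sym2.ind with | _ v w =>
  have hv := Sym2.mem_mk_left v w
  obtain ⟨z', ⟨hz', hvz'⟩, -⟩ := hM'.2 v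
  rwa [hM.eq_of_mem_of_mem hz (h hz') hv hvz']

theorem isPM_deleteEdges_iff : IsPM (G.deleteEdges S) M ↔ IsPM G M ∧ Disjoint S M := by
  rw [IsPM, IsPM, SimpleGraph.edgeSet_deleteEdges, Set.subset_sdiff, disjoint_comm, and_right_comm]

def matchingOf (φ : V → V) : Set (Sym2 V) := Set.range fun v => s(v, φ v)

theorem isPM_matchingOf {φ : V → V} (hφ : Involutive φ) (hadj : ∀ v, G.Adj v (φ v)) :
    IsPM G (matchingOf φ) := by
  refine ⟨Set.range_subset_iff.2 hadj, fun w => ⟨s(w, φ w), ⟨⟨w, rfl⟩, Sym2.mem_mk_left _ _⟩, ?_⟩⟩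
  rintro _ ⟨⟨v, rfl⟩, hw⟩
  rcases Sym2.mem_iff.1 hw with rfl | rfl
  · rfl
  · rw [hφ v, Sym2.eq_swap]

theorem mk_mem_matchingOf_iff {φ : V → V} (hφ : Involutive φ) {a b : V} :
    s(a, b) ∈ matchingOf φ ↔ φ a = b := by
  refine ⟨?_, fun h => ⟨a, h ▸ rfl⟩⟩
  rintro ⟨v, hv⟩
  rcases Sym2.eq_iff.1 hv with ⟨rfl, rfl⟩ | ⟨rfl, rfl⟩
  exacts [rfl, hφ _]

end PerfectMatching

section ForcingNumbers

variable {V : Type*} {G : SimpleGraph V}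

theorem isGlobalForcingSet_of_forall {S : Set (Sym2 V)} (hSG : S ⊆ G.edgeSet)
    (h : ∀ M₁ M₂, IsPM G M₁ → IsPM G M₂ → (∀ z ∈ S, z ∈ M₁ ↔ z ∈ M₂) → M₁ = M₂) :
    IsGlobalForcingSet G S :=
  ⟨hSG, fun M₁ M₂ h₁ h₂ hne heq => hne <| h M₁ M₂ h₁ h₂ fun z hz => by
    simpa [hz] using congrArg (z ∈ ·) heq⟩

/-- One edge takes at most two values on three perfect matchings, so it cannot separate them. -/
theorem two_le_ncard_of_isGlobalForcingSet [Finite V] {S M₁ M₂ M₃ : Set (Sym2 V)}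
    (hS : IsGlobalForcingSet G S) (h₁ : IsPM G M₁) (h₂ : IsPM G M₂) (h₃ : IsPM G M₃)
    (h₁₂ : M₁ ≠ M₂) (h₁₃ : M₁ ≠ M₃) (h₂₃ : M₂ ≠ M₃) : 2 ≤ S.ncard := by
  by_contra! hlt
  have hsub : S.Subsingleton := Set.ncard_le_one_iff_subsingleton.1 (by omega)
  have key : ∀ M, S ∩ M = ∅ ∨ S ∩ M = S := fun M =>
    (Set.eq_empty_or_nonempty (S ∩ M)).imp id fun ⟨z, hzS, hzM⟩ =>
      Set.inter_eq_left.2 fun y hy => hsub hzS hy ▸ hzM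
  rcases key M₁ with e₁ | e₁ <;> rcases key M₂ with e₂ | e₂ <;> rcases key M₃ with e₃ | e₃
  all_goals first
    | exact hS.2 _ _ h₁ h₂ h₁₂ (e₁.trans e₂.symm)
    | exact hS.2 _ _ h₁ h₃ h₁₃ (e₁.trans e₃.symm)
    | exact hS.2 _ _ h₂ h₃ h₂₃ (e₂.trans e₃.symm)

theorem gf_eq_two [Finite V] {S M₁ M₂ M₃ : Set (Sym2 V)} (hS : IsGlobalForcingSet G S)
    (hcard : S.ncard = 2) (h₁ : IsPM G M₁) (h₂ : IsPM G M₂) (h₃ : IsPM G M₃)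
    (h₁₂ : M₁ ≠ M₂) (h₁₃ : M₁ ≠ M₃) (h₂₃ : M₂ ≠ M₃) : gf G = 2 :=
  le_antisymm (Nat.sInf_le ⟨S, hS, hcard⟩) <| le_csInf ⟨2, S, hS, hcard⟩ <| by
    rintro _ ⟨T, hT, rfl⟩
    exact two_le_ncard_of_isGlobalForcingSet hT h₁ h₂ h₃ h₁₂ h₁₃ h₂₃

theorem isAntiForcingSet_of_forall_inter_nonempty {M S : Set (Sym2 V)} (hM : IsPM G M)
    (hSG : S ⊆ G.edgeSet) (hSM : Disjoint S M)
    (hhit : ∀ P, IsPM G P → P ≠ M → (S ∩ P).Nonempty) : IsAntiForcingSet G M S := by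
  refine ⟨hSG, hSM.inter_eq, isPM_deleteEdges_iff.2 ⟨hM, hSM⟩, fun P hP => ?_⟩
  obtain ⟨hPG, hSP⟩ := isPM_deleteEdges_iff.1 hP
  by_contra hne
  exact (hhit P hPG hne).ne_empty hSP.inter_eq

/-- An anti-forcing set of `M` meets every other perfect matching; two disjoint ones need two
edges. -/
theorem two_le_ncard_of_isAntiForcingSet [Finite V] {M S P₁ P₂ : Set (Sym2 V)}
    (hS : IsAntiForcingSet G M S) (h₁ : IsPM G P₁) (h₂ : IsPM G P₂) (h₁M : P₁ ≠ M) (h₂M : P₂ ≠ M)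
    (h₁₂ : Disjoint P₁ P₂) : 2 ≤ S.ncard := by
  have hit : ∀ P, IsPM G P → P ≠ M → ∃ z ∈ S, z ∈ P := fun P hP hPM => by
    by_contra! h
    exact hPM (hS.2.2.2 P (isPM_deleteEdges_iff.2 ⟨hP, Set.disjoint_left.2 h⟩))
  obtain ⟨z₁, hz₁S, hz₁⟩ := hit P₁ h₁ h₁M
  obtain ⟨z₂, hz₂S, hz₂⟩ := hit P₂ h₂ h₂M
  exact (Set.one_lt_ncard_iff (Set.toFinite S)).2 ⟨z₁, z₂, hz₁S, hz₂S, h₁₂.ne_of_mem hz₁ hz₂⟩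

theorem af_eq_two [Finite V] {M P₁ P₂ : Set (Sym2 V)} {z₁ z₂ : Sym2 V} (hM : IsPM G M)
    (hz : z₁ ≠ z₂) (hz₁ : z₁ ∈ G.edgeSet) (hz₂ : z₂ ∈ G.edgeSet) (hz₁M : z₁ ∉ M) (hz₂M : z₂ ∉ M)
    (hhit : ∀ P, IsPM G P → P ≠ M → z₁ ∈ P ∨ z₂ ∈ P)
    (h₁ : IsPM G P₁) (h₂ : IsPM G P₂) (h₁M : P₁ ≠ M) (h₂M : P₂ ≠ M) (h₁₂ : Disjoint P₁ P₂) :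
    af G M = 2 := by
  have hS : IsAntiForcingSet G M {z₁, z₂} := by
    refine isAntiForcingSet_of_forall_inter_nonempty hM (Set.insert_subset hz₁
      (Set.singleton_subset_iff.2 hz₂)) ?_ fun P hP hPM => ?_
    · simpa [Set.disjoint_left] using ⟨hz₁M, hz₂M⟩
    · rcases hhit P hP hPM with h | h
      exacts [⟨z₁, by simp, h⟩, ⟨z₂, by simp, h⟩]
  refine le_antisymm (Nat.sInf_le ⟨_, hS, Set.ncard_pair hz⟩)
    (le_csInf ⟨2, _, hS, Set.ncard_pair hz⟩ ?_)
  rintro _ ⟨T, hT, rfl⟩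
  exact two_le_ncard_of_isAntiForcingSet hT h₁ h₂ h₁M h₂M h₁₂

theorem Af_eq_of_forall_af_eq {M : Set (Sym2 V)} {k : ℕ} (hM : IsPM G M)
    (h : ∀ P, IsPM G P → af G P = k) : Af G = k := by
  have : {n | ∃ P, IsPM G P ∧ af G P = n} = {k} :=
    Set.eq_singleton_iff_unique_mem.2 ⟨⟨M, hM, h M hM⟩, by rintro _ ⟨P, hP, rfl⟩; exact h P hP⟩
  rw [Af, this, csSup_singleton]

end ForcingNumbers

namespace SimpleGraph.Iso

variable {V W : Type*} {G : SimpleGraph V} {G' : SimpleGraph W}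

theorem symm_image_image (σ : G ≃g G') (M : Set (Sym2 V)) :
    Sym2.map σ.symm '' (Sym2.map σ '' M) = M := by
  refine (Set.image_image _ _ _).trans ((Set.image_congr fun z _ => ?_).trans (Set.image_id M))
  induction z using Sym2.ind
  simp

theorem image_symm_image (σ : G ≃g G') (M : Set (Sym2 W)) :
    Sym2.map σ '' (Sym2.map σ.symm '' M) = M :=
  σ.symm.symm_image_image M

theorem sym2Map_image_injective (σ : G ≃g G') :
    Injective (Sym2.map σ '' · : Set (Sym2 V) → Set (Sym2 W)) :=
  Set.image_injective.2 (Sym2.map.injective σ.injective)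

theorem ncard_sym2Map_image (σ : G ≃g G') (M : Set (Sym2 V)) :
    (Sym2.map σ '' M).ncard = M.ncard :=
  Set.ncard_image_of_injective M (Sym2.map.injective σ.injective)

theorem image_subset_edgeSet (σ : G ≃g G') {M : Set (Sym2 V)} (h : M ⊆ G.edgeSet) :
    Sym2.map σ '' M ⊆ G'.edgeSet :=
  Set.image_subset_iff.2 fun _ hz => σ.map_mem_edgeSet_iff.2 (h hz)

theorem isPM_image (σ : G ≃g G') {M : Set (Sym2 V)} (hM : IsPM G M) :
    IsPM G' (Sym2.map σ '' M) := by
  refine ⟨σ.image_subset_edgeSet hM.1, fun w => ?_⟩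
  obtain ⟨z, ⟨hzM, hwz⟩, huniq⟩ := hM.2 (σ.symm w)
  refine ⟨Sym2.map σ z, ⟨⟨z, hzM, rfl⟩, Sym2.mem_map.2 ⟨_, hwz, σ.apply_symm_apply w⟩⟩, ?_⟩
  rintro _ ⟨⟨z', hz'M, rfl⟩, hw⟩
  obtain ⟨v, hv, rfl⟩ := Sym2.mem_map.1 hw
  rw [huniq z' ⟨hz'M, by rwa [σ.symm_apply_apply]⟩]

theorem isPM_image_iff (σ : G ≃g G') {M : Set (Sym2 V)} :
    IsPM G' (Sym2.map σ '' M) ↔ IsPM G M :=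
  ⟨fun h => σ.symm_image_image M ▸ σ.symm.isPM_image h, σ.isPM_image⟩

theorem isGlobalForcingSet_image (σ : G ≃g G') {S : Set (Sym2 V)} (hS : IsGlobalForcingSet G S) :
    IsGlobalForcingSet G' (Sym2.map σ '' S) := by
  refine ⟨σ.image_subset_edgeSet hS.1, fun M₁ M₂ h₁ h₂ hne heq => ?_⟩
  obtain ⟨N₁, rfl⟩ : ∃ N, Sym2.map σ '' N = M₁ := ⟨_, σ.image_symm_image M₁⟩
  obtain ⟨N₂, rfl⟩ : ∃ N, Sym2.map σ '' N = M₂ := ⟨_, σ.image_symm_image M₂⟩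
  rw [σ.isPM_image_iff] at h₁ h₂
  refine hS.2 _ _ h₁ h₂ (fun h => hne (h ▸ rfl)) (σ.sym2Map_image_injective ?_)
  simpa only [Set.image_inter (Sym2.map.injective σ.injective)] using heq

theorem isAntiForcingSet_image (σ : G ≃g G') {M S : Set (Sym2 V)} (hS : IsAntiForcingSet G M S) :
    IsAntiForcingSet G' (Sym2.map σ '' M) (Sym2.map σ '' S) := by
  obtain ⟨hSG, hSM, hM, huniq⟩ := hS
  have hinj := Sym2.map.injective σ.injective
  refine ⟨σ.image_subset_edgeSet hSG, by rw [← Set.image_inter hinj, hSM, Set.image_empty],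
    isPM_deleteEdges_iff.2 ⟨σ.isPM_image (isPM_deleteEdges_iff.1 hM).1,
      (Set.disjoint_image_iff hinj).2 (isPM_deleteEdges_iff.1 hM).2⟩, fun P hP => ?_⟩
  obtain ⟨N, rfl⟩ : ∃ N, Sym2.map σ '' N = P := ⟨_, σ.image_symm_image P⟩
  rw [isPM_deleteEdges_iff, σ.isPM_image_iff, Set.disjoint_image_iff hinj] at hP
  rw [huniq _ (isPM_deleteEdges_iff.2 hP)]

theorem gf_eq (σ : G ≃g G') : gf G = gf G' := by
  have : {n | ∃ S, IsGlobalForcingSet G S ∧ S.ncard = n}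
      = {n | ∃ S, IsGlobalForcingSet G' S ∧ S.ncard = n} := by
    ext n
    exact ⟨fun ⟨S, hS, hn⟩ => ⟨_, σ.isGlobalForcingSet_image hS,
      (σ.ncard_sym2Map_image S).trans hn⟩, fun ⟨S, hS, hn⟩ => ⟨_,
        σ.symm.isGlobalForcingSet_image hS, (σ.symm.ncard_sym2Map_image S).trans hn⟩⟩
  rw [gf, gf, this]

theorem af_eq (σ : G ≃g G') (M : Set (Sym2 V)) : af G M = af G' (Sym2.map σ '' M) := by
  have : {n | ∃ S, IsAntiForcingSet G M S ∧ S.ncard = n}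
      = {n | ∃ S, IsAntiForcingSet G' (Sym2.map σ '' M) S ∧ S.ncard = n} := by
    ext n
    refine ⟨fun ⟨S, hS, hn⟩ => ⟨_, σ.isAntiForcingSet_image hS,
      (σ.ncard_sym2Map_image S).trans hn⟩, fun ⟨S, hS, hn⟩ => ⟨_, ?_,
        (σ.symm.ncard_sym2Map_image S).trans hn⟩⟩
    simpa only [σ.symm_image_image] using σ.symm.isAntiForcingSet_image hS
  rw [af, af, this]

theorem Af_eq (σ : G ≃g G') : Af G = Af G' := by
  have : {n | ∃ M, IsPM G M ∧ af G M = n} = {n | ∃ M, IsPM G' M ∧ af G' M = n} := by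
    ext n
    refine ⟨fun ⟨M, hM, hn⟩ => ⟨_, σ.isPM_image hM, (σ.af_eq M).symm.trans hn⟩,
      fun ⟨M, hM, hn⟩ => ⟨_, σ.symm.isPM_image hM, ?_⟩⟩
    rwa [σ.af_eq, σ.image_symm_image]
  rw [Af, Af, this]

theorem ncard_edgeSet_eq (σ : G ≃g G') : G.edgeSet.ncard = G'.edgeSet.ncard :=
  Nat.card_congr σ.mapEdgeSet

end SimpleGraph.Iso

section CycleWithChords

variable {m : ℕ}

theorem cyc_edgeSet [Fact (1 < m)] :
    (cyc m).edgeSet = Set.range fun w : ZMod m => s(w, w + 1) := by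
  ext z
  induction z using Sym2.ind with | _ a b =>
  refine ⟨fun ⟨_, h⟩ => ?_, ?_⟩
  · rcases h with h | h
    · exact ⟨a, by simp only [← h, add_sub_cancel]⟩
    · exact ⟨b, by simp only [← h, add_sub_cancel, Sym2.eq_swap]⟩
  · rintro ⟨w, hw⟩
    rw [← hw]
    exact ⟨by simp, Or.inl (add_sub_cancel_left w 1)⟩

theorem ncard_edgeSet_cyc (hm : 3 ≤ m) : (cyc m).edgeSet.ncard = m := by
  have : Fact (1 < m) := ⟨by omega⟩
  have htwo : (2 : ZMod m) ≠ 0 := by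
    rw [Ne, ← Nat.cast_ofNat, ZMod.natCast_eq_zero_iff]
    exact fun h => absurd (Nat.le_of_dvd two_pos h) (by omega)
  have hinj : Injective fun w : ZMod m => s(w, w + 1) := fun v w h => by
    rcases Sym2.eq_iff.1 h with ⟨h, -⟩ | ⟨h₁, h₂⟩
    · exact h
    · exact absurd (by linear_combination h₂ - h₁) htwo
  rw [cyc_edgeSet, ← Set.image_univ, Set.ncard_image_of_injective _ hinj, Set.ncard_univ,
    Nat.card_zmod]

theorem edgeSet_cycleWithChords {F : Set (Sym2 (ZMod m))} (hF : ∀ e ∈ F, ¬ e.IsDiag) :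
    (cycleWithChords m F).edgeSet = (cyc m).edgeSet ∪ F := by
  rw [cycleWithChords, SimpleGraph.edgeSet_sup, SimpleGraph.edgeSet_fromEdgeSet]
  exact congrArg _ (sdiff_eq_left.2 (Set.disjoint_left.2 fun e he hd =>
    hF e he (Sym2.mem_diagSet.1 hd)))

theorem ncard_edgeSet_cycleWithChords (hm : 3 ≤ m) {F : Set (Sym2 (ZMod m))}
    (hF : ∀ e ∈ F, IsChordOf m e) : (cycleWithChords m F).edgeSet.ncard = m + F.ncard := by
  have : NeZero m := ⟨by omega⟩
  rw [edgeSet_cycleWithChords fun e he => (hF e he).1, Set.ncard_union_eq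
    (Set.disjoint_right.2 fun e he => (hF e he).2), ncard_edgeSet_cyc hm]

end CycleWithChords

namespace StronglyCrossed

variable {m : ℕ}

def vert (x : ZMod m) (i : ℕ) : ZMod m := x + i

def idx (x w : ZMod m) : ℕ := (w - x).val

def edge (x : ZMod m) (i : ℕ) : Sym2 (ZMod m) := s(vert x i, vert x (i + 1))

def chordE (x : ZMod m) (D : ℕ) : Sym2 (ZMod m) := s(vert x 0, vert x (D + 1))

def chordF (x : ZMod m) (D : ℕ) : Sym2 (ZMod m) := s(vert x D, vert x (m - 1))

def graph (x : ZMod m) (D : ℕ) : SimpleGraph (ZMod m) :=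
  cycleWithChords m {chordE x D, chordF x D}

structure Params (m D : ℕ) : Prop where
  even_m : m % 2 = 0
  even_D : D % 2 = 0
  two_le : 2 ≤ D
  add_four_le : D + 4 ≤ m

variable {x : ZMod m} {D i j k : ℕ}

theorem vert_add_one (x : ZMod m) (i : ℕ) : vert x i + 1 = vert x (i + 1) := by
  rw [vert, vert, Nat.cast_succ, add_assoc]

theorem vert_self (x : ZMod m) : vert x m = vert x 0 := by
  simp [vert]

theorem vert_inj (hi : i < m) (hj : j < m) : vert x i = vert x j ↔ i = j := by
  rw [vert, vert, add_right_inj, ZMod.natCast_eq_natCast_iff', Nat.mod_eq_of_lt hi,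
    Nat.mod_eq_of_lt hj]

theorem idx_vert (hi : i < m) : idx x (vert x i) = i := by
  rw [idx, vert, add_sub_cancel_left, ZMod.val_natCast, Nat.mod_eq_of_lt hi]

theorem idx_lt [NeZero m] (x w : ZMod m) : idx x w < m := ZMod.val_lt _

theorem vert_idx [NeZero m] (x w : ZMod m) : vert x (idx x w) = w := by
  rw [vert, idx, ZMod.natCast_zmod_val, add_sub_cancel]

theorem vert_mem_edge_iff (hk : k < m) (hi : i < m) :
    vert x k ∈ edge x i ↔ k = i ∨ k = i + 1 ∨ k = 0 ∧ i + 1 = m := by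
  rw [edge, Sym2.mem_iff, vert_inj hk hi]
  rcases Nat.lt_or_ge (i + 1) m with h | h
  · rw [vert_inj hk h]
    omega
  · rw [show i + 1 = m by omega, vert_self, vert_inj hk (by omega)]
    omega

theorem vert_mem_chordE_iff (hk : k < m) (hD : D + 1 < m) :
    vert x k ∈ chordE x D ↔ k = 0 ∨ k = D + 1 := by
  rw [chordE, Sym2.mem_iff, vert_inj hk (by omega), vert_inj hk hD]

theorem vert_mem_chordF_iff (hk : k < m) (hD : D < m) :
    vert x k ∈ chordF x D ↔ k = D ∨ k = m - 1 := by
  rw [chordF, Sym2.mem_iff, vert_inj hk hD, vert_inj hk (by omega)]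

theorem idx_mod_two_of_blackV_iff [NeZero m] (hm : m % 2 = 0) {y : ZMod m}
    (h : blackV m x ↔ blackV m y) : idx x y % 2 = 0 := by
  have hval : y.val = (x.val + idx x y) % m := by
    conv_lhs => rw [← vert_idx x y]
    rw [vert, ZMod.val_add, ZMod.val_natCast, Nat.mod_eq_of_lt (idx_lt x y)]
  have := ZMod.val_lt x
  have := idx_lt x y
  change x.val % 2 = 0 ↔ y.val % 2 = 0 at h
  rcases Nat.lt_or_ge (x.val + idx x y) m with hlt | hge
  · rw [Nat.mod_eq_of_lt hlt] at hval
    omega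
  · rw [Nat.mod_eq_sub_mod hge, Nat.mod_eq_of_lt (by omega)] at hval
    omega

theorem exists_params_of_stronglyCrossedChords [NeZero m] (hm : m % 2 = 0)
    {e f : Sym2 (ZMod m)} (hsc : StronglyCrossedChords m e f) :
    ∃ x D, Params m D ∧ e = chordE x D ∧ f = chordF x D := by
  obtain ⟨x, x₂, y₁, y₂, rfl, rfl, hcol, ⟨h₁, h₂, h₃⟩, ⟨-, ha₁⟩, ⟨-, ha₂⟩⟩ := hsc
  change 0 < idx x y₁ at h₁
  change idx x y₁ < idx x x₂ at h₂
  change idx x x₂ < idx x y₂ at h₃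
  have hlt := idx_lt x y₂
  have hy₁ : vert x (idx x y₁) = y₁ := vert_idx x y₁
  have hDm := idx_lt x y₁
  generalize hDdef : idx x y₁ = D at h₁ h₂ hy₁ hDm
  have hy₂ : y₂ = vert x (m - 1) := by
    rcases ha₁ with h | h
    · have : y₂ = vert x 1 := by rw [vert, Nat.cast_one]; linear_combination h
      rw [this, idx_vert (by omega)] at h₃
      omega
    · rw [← add_left_inj 1, vert_add_one, Nat.sub_add_cancel (by omega), vert_self, vert,
        Nat.cast_zero, add_zero]
      linear_combination -h
  have hx₂ : x₂ = vert x (D + 1) := by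
    rcases ha₂ with h | h
    · have : x₂ = vert x (D - 1) := by
        rw [← add_left_inj 1, vert_add_one, Nat.sub_add_cancel h₁, hy₁]
        linear_combination -h
      rw [this, idx_vert (by omega)] at h₂
      omega
    · rw [← vert_add_one, hy₁]
      linear_combination h
  have hD : D + 1 < m := by
    by_contra hD
    rw [hx₂, show D + 1 = m by omega, vert_self, idx_vert (by omega)] at h₂
    omega
  rw [hy₂, idx_vert (by omega), hx₂, idx_vert hD] at h₃
  have hpar := idx_mod_two_of_blackV_iff hm hcol
  rw [hDdef] at hpar
  refine ⟨x, D, ⟨hm, hpar, by omega, by omega⟩, ?_, ?_⟩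
  · rw [chordE, ← hx₂, vert, Nat.cast_zero, add_zero]
  · rw [chordF, hy₁, hy₂]

theorem edge_ne_chordE (hP : Params m D) (hi : i < m) : edge x i ≠ chordE x D := fun h => by
  have := hP.two_le; have := hP.add_four_le
  have h₀ := (vert_mem_edge_iff (x := x) (k := 0) (by omega) hi).1
    (by rw [h]; exact Sym2.mem_mk_left _ _)
  have h₁ := (vert_mem_edge_iff (x := x) (k := D + 1) (by omega) hi).1
    (by rw [h]; exact Sym2.mem_mk_right _ _)
  omega

theorem edge_ne_chordF (hP : Params m D) (hi : i < m) : edge x i ≠ chordF x D := fun h => by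
  have := hP.two_le; have := hP.add_four_le
  have h₀ := (vert_mem_edge_iff (x := x) (k := D) (by omega) hi).1
    (by rw [h]; exact Sym2.mem_mk_left _ _)
  have h₁ := (vert_mem_edge_iff (x := x) (k := m - 1) (by omega) hi).1
    (by rw [h]; exact Sym2.mem_mk_right _ _)
  omega

theorem mem_edgeSet_graph [NeZero m] (hP : Params m D) {z : Sym2 (ZMod m)}
    (hz : z ∈ (graph x D).edgeSet) :
    (∃ i < m, z = edge x i) ∨ z = chordE x D ∨ z = chordF x D := by
  have := hP.add_four_le
  have : Fact (1 < m) := ⟨by omega⟩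
  rw [graph, edgeSet_cycleWithChords, cyc_edgeSet] at hz
  · rcases hz with ⟨w, rfl⟩ | hz
    · exact Or.inl ⟨idx x w, idx_lt x w, by rw [edge, ← vert_add_one, vert_idx]⟩
    · exact Or.inr hz
  · rintro e (rfl | rfl)
    · rw [chordE, Sym2.mk_isDiag_iff, vert_inj] <;> omega
    · rw [chordF, Sym2.mk_isDiag_iff, vert_inj] <;> omega

/-- The edges of `graph x D` in terms of indices, each listed in one direction. -/
def Step (m D i j : ℕ) : Prop :=
  j = i + 1 ∨ i + 1 = m ∧ j = 0 ∨ i = 0 ∧ j = D + 1 ∨ i = D ∧ j = m - 1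

def IdxAdj (m D i j : ℕ) : Prop := Step m D i j ∨ Step m D j i

theorem adj_of_step (hP : Params m D) (hi : i < m) (hj : j < m) (h : Step m D i j) :
    (graph x D).Adj (vert x i) (vert x j) := by
  have := hP.two_le; have := hP.add_four_le
  have hne : vert x i ≠ vert x j := by rw [Ne, vert_inj hi hj]; unfold Step at h; omega
  rw [graph, cycleWithChords, SimpleGraph.sup_adj, SimpleGraph.fromEdgeSet_adj]
  rcases h with rfl | ⟨hi', rfl⟩ | ⟨rfl, rfl⟩ | ⟨rfl, rfl⟩
  · exact Or.inl ⟨hne, Or.inl (by rw [← vert_add_one, add_sub_cancel_left])⟩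
  · have : vert x i + 1 = vert x 0 := by rw [vert_add_one, hi', vert_self]
    exact Or.inl ⟨hne, Or.inl (by rw [← this, add_sub_cancel_left])⟩
  · exact Or.inr ⟨Or.inl rfl, hne⟩
  · exact Or.inr ⟨Or.inr rfl, hne⟩

theorem adj_of_idxAdj (hP : Params m D) (hi : i < m) (hj : j < m) (h : IdxAdj m D i j) :
    (graph x D).Adj (vert x i) (vert x j) :=
  h.elim (adj_of_step hP hi hj) fun h => (adj_of_step hP hj hi h).symm

theorem edge_mem_edgeSet (hP : Params m D) (hi : i + 1 < m) : edge x i ∈ (graph x D).edgeSet :=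
  adj_of_step hP (by omega) hi (Or.inl rfl)

/-- Perfect matchings of `graph x D` are encoded by the partner function on the indices
`0, …, m - 1`; see `idxMatching`. -/
def IsPartnerFn (m D : ℕ) (p : ℕ → ℕ) : Prop :=
  ∀ i < m, p i < m ∧ p (p i) = i ∧ IdxAdj m D i (p i)

def partnerMap (x : ZMod m) (p : ℕ → ℕ) (w : ZMod m) : ZMod m := vert x (p (idx x w))

def idxMatching (x : ZMod m) (p : ℕ → ℕ) : Set (Sym2 (ZMod m)) := matchingOf (partnerMap x p)

section IdxMatching

variable {p q : ℕ → ℕ}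

theorem partnerMap_vert (hi : i < m) : partnerMap x p (vert x i) = vert x (p i) := by
  rw [partnerMap, idx_vert hi]

variable [NeZero m]

theorem involutive_partnerMap (hp : IsPartnerFn m D p) : Involutive (partnerMap x p) :=
  fun w => by
  obtain ⟨hlt, hpp, -⟩ := hp _ (idx_lt x w)
  rw [partnerMap, partnerMap, idx_vert hlt, hpp, vert_idx]

theorem isPM_idxMatching (hP : Params m D) (hp : IsPartnerFn m D p) :
    IsPM (graph x D) (idxMatching x p) :=
  isPM_matchingOf (involutive_partnerMap hp) fun w => by
    obtain ⟨hlt, -, hadj⟩ := hp _ (idx_lt x w)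
    have := adj_of_idxAdj (x := x) hP (idx_lt x w) hlt hadj
    rwa [vert_idx] at this

theorem mk_mem_idxMatching_iff (hp : IsPartnerFn m D p) (hi : i < m) (hj : j < m) :
    s(vert x i, vert x j) ∈ idxMatching x p ↔ p i = j := by
  rw [idxMatching, mk_mem_matchingOf_iff (involutive_partnerMap hp), partnerMap_vert hi,
    vert_inj (hp i hi).1 hj]

theorem edge_mem_idxMatching_iff (hp : IsPartnerFn m D p) (hi : i + 1 < m) :
    edge x i ∈ idxMatching x p ↔ p i = i + 1 :=
  mk_mem_idxMatching_iff hp (by omega) hi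

theorem disjoint_idxMatching (hp : IsPartnerFn m D p) (hq : IsPartnerFn m D q)
    (h : ∀ i < m, p i ≠ q i) : Disjoint (idxMatching x p) (idxMatching x q) := by
  refine Set.disjoint_left.2 ?_
  rintro _ ⟨w, rfl⟩ hw
  obtain ⟨i, hi, rfl⟩ : ∃ i < m, vert x i = w := ⟨_, idx_lt x w, vert_idx x w⟩
  dsimp only at hw
  rw [partnerMap_vert hi, mk_mem_idxMatching_iff hq hi (hp i hi).1] at hw
  exact h i hi hw.symm

theorem idxMatching_subset (hp : IsPartnerFn m D p) {M : Set (Sym2 (ZMod m))}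
    (hedge : ∀ k, k + 1 < m → p k = k + 1 → edge x k ∈ M)
    (hrest : ∀ i < m, p i ≠ i + 1 → p i + 1 ≠ i → s(vert x i, vert x (p i)) ∈ M) :
    idxMatching x p ⊆ M := by
  rintro _ ⟨w, rfl⟩
  obtain ⟨i, hi, rfl⟩ : ∃ i < m, vert x i = w := ⟨_, idx_lt x w, vert_idx x w⟩
  dsimp only
  rw [partnerMap_vert hi]
  obtain ⟨hlt, hpp, -⟩ := hp i hi
  by_cases h₁ : p i = i + 1
  · exact h₁ ▸ hedge i (h₁ ▸ hlt) h₁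
  by_cases h₂ : p i + 1 = i
  · have := hedge (p i) (by omega) (by omega)
    rwa [edge, h₂, Sym2.eq_swap] at this
  exact hrest i hi h₁ h₂

end IdxMatching

def partnerEven (i : ℕ) : ℕ := if i % 2 = 0 then i + 1 else i - 1

def partnerOdd (m i : ℕ) : ℕ :=
  if i = 0 then m - 1 else if i = m - 1 then 0 else if i % 2 = 1 then i + 1 else i - 1

def partnerE (D i : ℕ) : ℕ :=
  if i = 0 then D + 1 else if i = D + 1 then 0
  else if i < D + 1 then (if i % 2 = 1 then i + 1 else i - 1)
  else if i % 2 = 0 then i + 1 else i - 1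

def partnerF (m D i : ℕ) : ℕ :=
  if i = D then m - 1 else if i = m - 1 then D
  else if i < D then (if i % 2 = 0 then i + 1 else i - 1)
  else if i % 2 = 1 then i + 1 else i - 1

section Partners

variable (hP : Params m D)
include hP

theorem isPartnerFn_even : IsPartnerFn m D partnerEven := fun i hi => by
  have := hP.even_m
  refine ⟨?_, ?_, ?_⟩
  · unfold partnerEven; split_ifs <;> omega
  · unfold partnerEven; split_ifs <;> first | contradiction | omega
  · unfold partnerEven IdxAdj Step; split_ifs <;> omega

theorem isPartnerFn_odd : IsPartnerFn m D (partnerOdd m) := fun i hi => by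
  have := hP.even_m
  refine ⟨?_, ?_, ?_⟩
  · unfold partnerOdd; split_ifs <;> omega
  · unfold partnerOdd; split_ifs <;> first | contradiction | omega
  · unfold partnerOdd IdxAdj Step; split_ifs <;> omega

theorem isPartnerFn_E : IsPartnerFn m D (partnerE D) := fun i hi => by
  have ⟨_, _, _, _⟩ := hP
  refine ⟨?_, ?_, ?_⟩
  · unfold partnerE; split_ifs <;> omega
  · unfold partnerE; split_ifs <;> first | contradiction | omega
  · unfold partnerE IdxAdj Step; split_ifs <;> omega

theorem isPartnerFn_F : IsPartnerFn m D (partnerF m D) := fun i hi => by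
  have ⟨_, _, _, _⟩ := hP
  refine ⟨?_, ?_, ?_⟩
  · unfold partnerF; split_ifs <;> omega
  · unfold partnerF; split_ifs <;> first | contradiction | omega
  · unfold partnerF IdxAdj Step; split_ifs <;> omega

end Partners

def matchingEven (x : ZMod m) : Set (Sym2 (ZMod m)) := idxMatching x partnerEven

def matchingOdd (x : ZMod m) : Set (Sym2 (ZMod m)) := idxMatching x (partnerOdd m)

def matchingE (x : ZMod m) (D : ℕ) : Set (Sym2 (ZMod m)) := idxMatching x (partnerE D)

def matchingF (x : ZMod m) (D : ℕ) : Set (Sym2 (ZMod m)) := idxMatching x (partnerF m D)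

theorem edge_not_mem_of_chordE_mem (hP : Params m D) {M : Set (Sym2 (ZMod m))}
    (hM : IsPM (graph x D) M) (hE : chordE x D ∈ M) (hi : i < m) (hk : vert x k ∈ chordE x D)
    (hki : vert x k ∈ edge x i) : edge x i ∉ M :=
  fun h => edge_ne_chordE hP hi (hM.eq_of_mem_of_mem h hE hki hk)

theorem edge_not_mem_of_chordF_mem (hP : Params m D) {M : Set (Sym2 (ZMod m))}
    (hM : IsPM (graph x D) M) (hF : chordF x D ∈ M) (hi : i < m) (hk : vert x k ∈ chordF x D)
    (hki : vert x k ∈ edge x i) : edge x i ∉ M :=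
  fun h => edge_ne_chordF hP hi (hM.eq_of_mem_of_mem h hF hki hk)

section Classification

variable [NeZero m] (hP : Params m D) {M : Set (Sym2 (ZMod m))} (hM : IsPM (graph x D) M)
include hP hM

/-- At a vertex not covered by a chord of `M`, exactly one of its two cycle edges is in `M`. -/
theorem edge_succ_mem_iff (hj : j + 1 < m) (hE : chordE x D ∈ M → j + 1 ≠ D + 1)
    (hF : chordF x D ∈ M → j + 1 ≠ D ∧ j + 2 ≠ m) : edge x (j + 1) ∈ M ↔ edge x j ∉ M := by
  have := hP.two_le; have := hP.add_four_le
  refine hM.mem_iff_not_mem (v := vert x (j + 1)) (fun h => ?_)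
    ((vert_mem_edge_iff hj (by omega)).2 (by omega)) (Sym2.mem_mk_left _ _) fun z hz hvz => ?_
  · have := (vert_mem_edge_iff (x := x) (k := j) (by omega) hj).1 (h ▸ Sym2.mem_mk_left _ _)
    omega
  rcases mem_edgeSet_graph hP (hM.1 hz) with ⟨i, hi, rfl⟩ | rfl | rfl
  · rw [vert_mem_edge_iff hj hi] at hvz
    obtain rfl | rfl : i = j ∨ i = j + 1 := by omega
    exacts [Or.inl rfl, Or.inr rfl]
  · rw [vert_mem_chordE_iff hj (by omega)] at hvz
    exact absurd hvz (by have := hE hz; omega)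
  · rw [vert_mem_chordF_iff hj (by omega)] at hvz
    exact absurd hvz (by have := hF hz; omega)

theorem chordF_not_mem_of_chordE_mem (hE : chordE x D ∈ M) : chordF x D ∉ M := fun hF => by
  have ⟨_, _, _, _⟩ := hP
  have h₀ : edge x 0 ∉ M :=
    edge_not_mem_of_chordE_mem hP hM hE (by omega) (Sym2.mem_mk_left _ _) (Sym2.mem_mk_left _ _)
  have hD : edge x (D - 1) ∉ M := edge_not_mem_of_chordF_mem hP hM hF (by omega)
    (Sym2.mem_mk_left _ _) ((vert_mem_edge_iff (by omega) (by omega)).2 (by omega))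
  have := iff_odd_of_alternating (b := (edge x · ∈ M)) (a := 0) (c := D - 1)
    (fun j _ hj => edge_succ_mem_iff hP hM (by omega) (fun _ => by omega) (fun _ => by omega))
    h₀ le_rfl (by omega) (D - 1) (by omega) le_rfl
  exact hD (this.2 (by omega))

theorem eq_matchingE_of_chordE_mem (hE : chordE x D ∈ M) : M = matchingE x D := by
  have hF := chordF_not_mem_of_chordE_mem hP hM hE
  have ⟨_, _, _, _⟩ := hP
  have alt : ∀ j, j + 1 < m → j + 1 ≠ D + 1 → (edge x (j + 1) ∈ M ↔ edge x j ∉ M) :=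
    fun j hj hjD => edge_succ_mem_iff hP hM hj (fun _ => hjD) (fun h => absurd h hF)
  have low := iff_odd_of_alternating (b := (edge x · ∈ M)) (a := 0) (c := D - 1)
    (fun j _ hj => alt j (by omega) (by omega))
    (edge_not_mem_of_chordE_mem hP hM hE (by omega) (Sym2.mem_mk_left _ _) (Sym2.mem_mk_left _ _))
    le_rfl (by omega)
  have high := iff_odd_of_alternating (b := (edge x · ∈ M)) (a := D + 1) (c := m - 2)
    (fun j hj₁ hj₂ => alt j (by omega) (by omega))
    (edge_not_mem_of_chordE_mem hP hM hE (by omega) (Sym2.mem_mk_right _ _) (Sym2.mem_mk_left _ _))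
    le_rfl (by omega)
  refine (hM.eq_of_subset (isPM_idxMatching hP (isPartnerFn_E hP))
    (idxMatching_subset (isPartnerFn_E hP) (fun k hk hpk => ?_) fun i hi h₁ h₂ => ?_)).symm
  · unfold partnerE at hpk
    split_ifs at hpk <;> first
      | omega
      | exact (low k (by omega) (by omega)).2 (by omega)
      | exact (high k (by omega) (by omega)).2 (by omega)
  · unfold partnerE at h₁ h₂ ⊢
    split_ifs at h₁ h₂ ⊢ with h0 hD
    · rwa [h0]
    · rwa [hD, Sym2.eq_swap]
    all_goals omega

theorem eq_matchingF_of_chordF_mem (hF : chordF x D ∈ M) : M = matchingF x D := by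
  have hE : chordE x D ∉ M := fun hE => chordF_not_mem_of_chordE_mem hP hM hE hF
  have ⟨_, _, _, _⟩ := hP
  have alt : ∀ j, j + 2 < m → j + 1 ≠ D → (edge x (j + 1) ∈ M ↔ edge x j ∉ M) :=
    fun j hj hjD =>
      edge_succ_mem_iff hP hM (by omega) (fun h => absurd h hE) fun _ => ⟨hjD, by omega⟩
  have low := iff_odd_of_alternating (b := (edge x · ∈ M)) (a := 0) (c := D - 1)
    (fun j _ hj => alt j (by omega) (by omega))
    (edge_not_mem_of_chordF_mem hP hM hF (by omega) (Sym2.mem_mk_left _ _)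
      ((vert_mem_edge_iff (by omega) (by omega)).2 (by omega)))
    (by omega) le_rfl
  have high := iff_odd_of_alternating (b := (edge x · ∈ M)) (a := D + 1) (c := m - 2)
    (fun j hj₁ hj₂ => alt j (by omega) (by omega))
    (edge_not_mem_of_chordF_mem hP hM hF (by omega) (Sym2.mem_mk_right _ _)
      ((vert_mem_edge_iff (by omega) (by omega)).2 (by omega)))
    (by omega) le_rfl
  refine (hM.eq_of_subset (isPM_idxMatching hP (isPartnerFn_F hP))
    (idxMatching_subset (isPartnerFn_F hP) (fun k hk hpk => ?_) fun i hi h₁ h₂ => ?_)).symm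
  · unfold partnerF at hpk
    split_ifs at hpk <;> first
      | omega
      | exact (low k (by omega) (by omega)).2 (by omega)
      | exact (high k (by omega) (by omega)).2 (by omega)
  · unfold partnerF at h₁ h₂ ⊢
    split_ifs at h₁ h₂ ⊢ with hD hl
    · rwa [hD]
    · rwa [hl, Sym2.eq_swap]
    all_goals omega

theorem eq_matchingEven_or_matchingOdd (hE : chordE x D ∉ M) (hF : chordF x D ∉ M) :
    M = matchingEven x ∨ M = matchingOdd x := by
  have ⟨_, _, _, _⟩ := hP
  have alt : ∀ j, 0 ≤ j → j < m - 1 → (edge x (j + 1) ∈ M ↔ edge x j ∉ M) :=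
    fun j _ hj => edge_succ_mem_iff hP hM (by omega) (fun h => absurd h hE) (fun h => absurd h hF)
  by_cases h₀ : edge x 0 ∈ M
  · have h₁ : edge x 1 ∉ M := fun h => (alt 0 le_rfl (by omega)).1 h h₀
    have hb := iff_odd_of_alternating (b := (edge x · ∈ M)) (a := 0) (c := m - 1) alt h₁
      (by omega) (by omega)
    refine Or.inl (hM.eq_of_subset (isPM_idxMatching hP (isPartnerFn_even hP))
      (idxMatching_subset (isPartnerFn_even hP) (fun k hk hpk => ?_) fun i hi h₁ h₂ => ?_)).symm
    · unfold partnerEven at hpk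
      exact (hb k (by omega) (by omega)).2 (by split_ifs at hpk <;> omega)
    · unfold partnerEven at h₁ h₂
      split_ifs at h₁ h₂ <;> omega
  · have hb := iff_odd_of_alternating (b := (edge x · ∈ M)) (a := 0) (c := m - 1) alt h₀
      le_rfl (by omega)
    refine Or.inr (hM.eq_of_subset (isPM_idxMatching hP (isPartnerFn_odd hP))
      (idxMatching_subset (isPartnerFn_odd hP) (fun k hk hpk => ?_) fun i hi h₁ h₂ => ?_)).symm
    · unfold partnerOdd at hpk
      exact (hb k (by omega) (by omega)).2 (by split_ifs at hpk <;> omega)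
    · have hlast : s(vert x (m - 1), vert x 0) ∈ M := by
        have := (hb (m - 1) (by omega) le_rfl).2 (by omega)
        rwa [edge, Nat.sub_add_cancel (by omega), vert_self] at this
      unfold partnerOdd at h₁ h₂ ⊢
      split_ifs at h₁ h₂ ⊢ with h0 hl
      · rwa [h0, Sym2.eq_swap]
      · rwa [hl]
      all_goals omega

theorem eq_or_eq_or_eq_or_eq_of_isPM :
    M = matchingEven x ∨ M = matchingOdd x ∨ M = matchingE x D ∨ M = matchingF x D := by
  by_cases hE : chordE x D ∈ M
  · exact Or.inr (Or.inr (Or.inl (eq_matchingE_of_chordE_mem hP hM hE)))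
  by_cases hF : chordF x D ∈ M
  · exact Or.inr (Or.inr (Or.inr (eq_matchingF_of_chordF_mem hP hM hF)))
  exact (eq_matchingEven_or_matchingOdd hP hM hE hF).imp_right Or.inl

end Classification

section Invariants

variable [NeZero m] (hP : Params m D)
include hP

theorem edge_mem_matchingEven_iff (hi : i + 1 < m) : edge x i ∈ matchingEven x ↔ i % 2 = 0 := by
  rw [matchingEven, edge_mem_idxMatching_iff (isPartnerFn_even hP) hi, partnerEven]
  have ⟨_, _, _, _⟩ := hP
  split_ifs <;> constructor <;> intro <;> first | contradiction | omega

theorem edge_mem_matchingOdd_iff (hi : i + 1 < m) : edge x i ∈ matchingOdd x ↔ i % 2 = 1 := by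
  rw [matchingOdd, edge_mem_idxMatching_iff (isPartnerFn_odd hP) hi, partnerOdd]
  have ⟨_, _, _, _⟩ := hP
  split_ifs <;> constructor <;> intro <;> first | contradiction | omega

theorem edge_mem_matchingE_iff (hi : i + 1 < m) :
    edge x i ∈ matchingE x D ↔ i < D ∧ i % 2 = 1 ∨ D + 1 < i ∧ i % 2 = 0 := by
  rw [matchingE, edge_mem_idxMatching_iff (isPartnerFn_E hP) hi, partnerE]
  have ⟨_, _, _, _⟩ := hP
  split_ifs <;> constructor <;> intro <;> first | contradiction | omega

theorem edge_mem_matchingF_iff (hi : i + 1 < m) :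
    edge x i ∈ matchingF x D ↔ i < D ∧ i % 2 = 0 ∨ D < i ∧ i % 2 = 1 := by
  rw [matchingF, edge_mem_idxMatching_iff (isPartnerFn_F hP) hi, partnerF]
  have ⟨_, _, _, _⟩ := hP
  split_ifs <;> constructor <;> intro <;> first | contradiction | omega

theorem edges_matchingEven : edge x 0 ∈ matchingEven x ∧ edge x 1 ∉ matchingEven x ∧
    edge x (D + 1) ∉ matchingEven x ∧ edge x (D + 2) ∈ matchingEven x := by
  have ⟨_, _, _, _⟩ := hP
  refine ⟨?_, ?_, ?_, ?_⟩ <;> rw [edge_mem_matchingEven_iff hP ?_] <;> omega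

theorem edges_matchingOdd : edge x 0 ∉ matchingOdd x ∧ edge x 1 ∈ matchingOdd x ∧
    edge x (D + 1) ∈ matchingOdd x ∧ edge x (D + 2) ∉ matchingOdd x := by
  have ⟨_, _, _, _⟩ := hP
  refine ⟨?_, ?_, ?_, ?_⟩ <;> rw [edge_mem_matchingOdd_iff hP ?_] <;> omega

theorem edges_matchingE : edge x 0 ∉ matchingE x D ∧ edge x 1 ∈ matchingE x D ∧
    edge x (D + 1) ∉ matchingE x D ∧ edge x (D + 2) ∈ matchingE x D := by
  have ⟨_, _, _, _⟩ := hP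
  refine ⟨?_, ?_, ?_, ?_⟩ <;> rw [edge_mem_matchingE_iff hP ?_] <;> omega

theorem edges_matchingF : edge x 0 ∈ matchingF x D ∧ edge x 1 ∉ matchingF x D ∧
    edge x (D + 1) ∈ matchingF x D ∧ edge x (D + 2) ∉ matchingF x D := by
  have ⟨_, _, _, _⟩ := hP
  refine ⟨?_, ?_, ?_, ?_⟩ <;> rw [edge_mem_matchingF_iff hP ?_] <;> omega

/- In the proofs below, `aₖ, bₖ, cₖ, dₖ` record whether `edge x 0`, `edge x 1`, `edge x (D + 1)`,
`edge x (D + 2)` lie in the `k`-th of `matchingEven`, `matchingOdd`, `matchingE`, `matchingF`. -/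

theorem gf_graph : gf (graph x D) = 2 := by
  have ⟨_, _, _, _⟩ := hP
  obtain ⟨-, a₁, -, b₁⟩ := edges_matchingEven (x := x) hP
  obtain ⟨-, a₂, -, b₂⟩ := edges_matchingOdd (x := x) hP
  obtain ⟨-, a₃, -, b₃⟩ := edges_matchingE (x := x) hP
  obtain ⟨-, a₄, -, b₄⟩ := edges_matchingF (x := x) hP
  refine gf_eq_two (S := {edge x 1, edge x (D + 2)}) (isGlobalForcingSet_of_forall
    (Set.insert_subset (edge_mem_edgeSet hP (by omega))
      (Set.singleton_subset_iff.2 (edge_mem_edgeSet hP (by omega))))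
    fun M₁ M₂ h₁ h₂ h => ?_) (Set.ncard_pair (ne_of_mem_of_not_mem a₂ b₂))
    (isPM_idxMatching hP (isPartnerFn_even hP)) (isPM_idxMatching hP (isPartnerFn_odd hP))
    (isPM_idxMatching hP (isPartnerFn_E hP)) (ne_of_mem_of_not_mem' b₁ b₂)
    (ne_of_mem_of_not_mem' a₃ a₁).symm (ne_of_mem_of_not_mem' b₃ b₂).symm
  have h₁' := h _ (Set.mem_insert _ _)
  have h₂' := h _ (Set.mem_insert_of_mem _ rfl)
  rcases eq_or_eq_or_eq_or_eq_of_isPM hP h₁ with rfl | rfl | rfl | rfl <;>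
    rcases eq_or_eq_or_eq_or_eq_of_isPM hP h₂ with rfl | rfl | rfl | rfl <;>
    first | rfl | tauto

theorem disjoint_matchingEven_matchingOdd : Disjoint (matchingEven x) (matchingOdd x) :=
  disjoint_idxMatching (isPartnerFn_even hP) (isPartnerFn_odd hP) fun i hi => by
    have ⟨_, _, _, _⟩ := hP
    unfold partnerEven partnerOdd; split_ifs <;> omega

theorem disjoint_matchingE_matchingF : Disjoint (matchingE x D) (matchingF x D) :=
  disjoint_idxMatching (isPartnerFn_E hP) (isPartnerFn_F hP) fun i hi => by
    have ⟨_, _, _, _⟩ := hP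
    unfold partnerE partnerF; split_ifs <;> omega

theorem af_matchingEven : af (graph x D) (matchingEven x) = 2 := by
  have ⟨_, _, _, _⟩ := hP
  obtain ⟨a₁, b₁, c₁, d₁⟩ := edges_matchingEven (x := x) hP
  obtain ⟨a₂, b₂, c₂, d₂⟩ := edges_matchingOdd (x := x) hP
  obtain ⟨a₃, b₃, c₃, d₃⟩ := edges_matchingE (x := x) hP
  obtain ⟨a₄, b₄, c₄, d₄⟩ := edges_matchingF (x := x) hP
  refine af_eq_two (isPM_idxMatching hP (isPartnerFn_even hP)) (ne_of_mem_of_not_mem b₃ c₃)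
    (edge_mem_edgeSet hP (by omega)) (edge_mem_edgeSet hP (by omega)) b₁ c₁
    (fun P hQ hne => ?_) (isPM_idxMatching hP (isPartnerFn_E hP))
    (isPM_idxMatching hP (isPartnerFn_F hP)) (ne_of_mem_of_not_mem' b₃ b₁)
    (ne_of_mem_of_not_mem' c₄ c₁) (disjoint_matchingE_matchingF hP)
  rcases eq_or_eq_or_eq_or_eq_of_isPM hP hQ with rfl | rfl | rfl | rfl
  exacts [absurd rfl hne, Or.inl b₂, Or.inl b₃, Or.inr c₄]

theorem af_matchingOdd : af (graph x D) (matchingOdd x) = 2 := by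
  have ⟨_, _, _, _⟩ := hP
  obtain ⟨a₁, b₁, c₁, d₁⟩ := edges_matchingEven (x := x) hP
  obtain ⟨a₂, b₂, c₂, d₂⟩ := edges_matchingOdd (x := x) hP
  obtain ⟨a₃, b₃, c₃, d₃⟩ := edges_matchingE (x := x) hP
  obtain ⟨a₄, b₄, c₄, d₄⟩ := edges_matchingF (x := x) hP
  refine af_eq_two (isPM_idxMatching hP (isPartnerFn_odd hP)) (ne_of_mem_of_not_mem a₄ d₄)
    (edge_mem_edgeSet hP (by omega)) (edge_mem_edgeSet hP (by omega)) a₂ d₂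
    (fun P hQ hne => ?_) (isPM_idxMatching hP (isPartnerFn_E hP))
    (isPM_idxMatching hP (isPartnerFn_F hP)) (ne_of_mem_of_not_mem' d₃ d₂)
    (ne_of_mem_of_not_mem' a₄ a₂) (disjoint_matchingE_matchingF hP)
  rcases eq_or_eq_or_eq_or_eq_of_isPM hP hQ with rfl | rfl | rfl | rfl
  exacts [Or.inl a₁, absurd rfl hne, Or.inr d₃, Or.inl a₄]

theorem af_matchingE : af (graph x D) (matchingE x D) = 2 := by
  have ⟨_, _, _, _⟩ := hP
  obtain ⟨a₁, b₁, c₁, d₁⟩ := edges_matchingEven (x := x) hP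
  obtain ⟨a₂, b₂, c₂, d₂⟩ := edges_matchingOdd (x := x) hP
  obtain ⟨a₃, b₃, c₃, d₃⟩ := edges_matchingE (x := x) hP
  obtain ⟨a₄, b₄, c₄, d₄⟩ := edges_matchingF (x := x) hP
  refine af_eq_two (isPM_idxMatching hP (isPartnerFn_E hP)) (ne_of_mem_of_not_mem a₁ c₁)
    (edge_mem_edgeSet hP (by omega)) (edge_mem_edgeSet hP (by omega)) a₃ c₃
    (fun P hQ hne => ?_) (isPM_idxMatching hP (isPartnerFn_even hP))
    (isPM_idxMatching hP (isPartnerFn_odd hP)) (ne_of_mem_of_not_mem' a₁ a₃)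
    (ne_of_mem_of_not_mem' c₂ c₃) (disjoint_matchingEven_matchingOdd hP)
  rcases eq_or_eq_or_eq_or_eq_of_isPM hP hQ with rfl | rfl | rfl | rfl
  exacts [Or.inl a₁, Or.inr c₂, absurd rfl hne, Or.inl a₄]

theorem af_matchingF : af (graph x D) (matchingF x D) = 2 := by
  have ⟨_, _, _, _⟩ := hP
  obtain ⟨a₁, b₁, c₁, d₁⟩ := edges_matchingEven (x := x) hP
  obtain ⟨a₂, b₂, c₂, d₂⟩ := edges_matchingOdd (x := x) hP
  obtain ⟨a₃, b₃, c₃, d₃⟩ := edges_matchingE (x := x) hP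
  obtain ⟨a₄, b₄, c₄, d₄⟩ := edges_matchingF (x := x) hP
  refine af_eq_two (isPM_idxMatching hP (isPartnerFn_F hP)) (ne_of_mem_of_not_mem b₂ d₂)
    (edge_mem_edgeSet hP (by omega)) (edge_mem_edgeSet hP (by omega)) b₄ d₄
    (fun P hQ hne => ?_) (isPM_idxMatching hP (isPartnerFn_even hP))
    (isPM_idxMatching hP (isPartnerFn_odd hP)) (ne_of_mem_of_not_mem' d₁ d₄)
    (ne_of_mem_of_not_mem' b₂ b₄) (disjoint_matchingEven_matchingOdd hP)
  rcases eq_or_eq_or_eq_or_eq_of_isPM hP hQ with rfl | rfl | rfl | rfl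
  exacts [Or.inr d₁, Or.inl b₂, Or.inl b₃, absurd rfl hne]

theorem af_graph {M : Set (Sym2 (ZMod m))} (hM : IsPM (graph x D) M) : af (graph x D) M = 2 := by
  rcases eq_or_eq_or_eq_or_eq_of_isPM hP hM with rfl | rfl | rfl | rfl
  exacts [af_matchingEven hP, af_matchingOdd hP, af_matchingE hP, af_matchingF hP]

theorem Af_graph : Af (graph x D) = 2 :=
  Af_eq_of_forall_af_eq (isPM_idxMatching hP (isPartnerFn_even hP)) fun _ => af_graph hP

end Invariants

end StronglyCrossed

theorem statement_17_general {V : Type*} [Fintype V] (G : SimpleGraph V) (n : ℕ)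
    (hn : 2 ≤ n) (e f : Sym2 (ZMod (2 * n))) (hef : e ≠ f)
    (he : IsChordOf (2 * n) e) (hf : IsChordOf (2 * n) f)
    (hsc : StronglyCrossedChords (2 * n) e f)
    (hiso : Nonempty (G ≃g cycleWithChords (2 * n) {e, f})) :
    gf G = 2 ∧ Af G = 2 ∧ G.edgeSet.ncard + 1 - Fintype.card V = 3 := by
  obtain ⟨σ⟩ := hiso
  have : NeZero (2 * n) := ⟨by omega⟩
  have hcard : G.edgeSet.ncard = 2 * n + 2 := by
    rw [σ.ncard_edgeSet_eq, ncard_edgeSet_cycleWithChords (by omega)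
      (by rintro _ (rfl | rfl); exacts [he, hf]), Set.ncard_pair hef]
  obtain ⟨x, D, hP, rfl, rfl⟩ :=
    StronglyCrossed.exists_params_of_stronglyCrossedChords (by omega) hsc
  refine ⟨?_, ?_, ?_⟩
  · exact σ.gf_eq.trans (StronglyCrossed.gf_graph hP)
  · exact σ.Af_eq.trans (StronglyCrossed.Af_graph hP)
  · rw [hcard, σ.card_eq, ZMod.card]
    omega

/-- Let `G` be a bipartite graph consisting of a Hamiltonian cycle of even length
together with exactly two chords, which are strongly crossed. Then
`gf(G) = Af(G) = 2`, while `c(G) = 3`. -/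
theorem statement_17 {V : Type*} [Fintype V] (G : SimpleGraph V) (n : ℕ)
    (hn : 2 ≤ n) (e f : Sym2 (ZMod (2 * n))) (hef : e ≠ f)
    (he : IsChordOf (2 * n) e) (hf : IsChordOf (2 * n) f)
    (hsc : StronglyCrossedChords (2 * n) e f)
    (hbip : G.Colorable 2)
    (hiso : Nonempty (G ≃g cycleWithChords (2 * n) {e, f})) :
    gf G = 2 ∧ Af G = 2 ∧ G.edgeSet.ncard + 1 - Fintype.card V = 3 :=
  statement_17_general G n hn e f hef he hf hsc hiso
end
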